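/- Let a, c, d be three distinct letters and let L ⊆ {a}* be any language that is not semilinear. Then the language L' = c·L·d ∪ d·{a}*·c over the alphabet {a, c, d} is semilinear, but the right quotient L'·{d}⁻¹ = {w : wd ∈ L'} equals c·L and is not semilinear. (Hence the class of semilinear languages is not closed under right quotient.) -/

import Mathlib

/-!
Every word of `c·L·d` has the same Parikh image as a word of `d·a*·c`, so the Parikh image
of `L'` is the linear set `ψ(cd) + ℕ·ψ(a)`, whatever `L` is. Since the words of `d·a*·c`
end in `c ≠ d`, the quotient by `d` only sees `c·L·d` and is `c·L`. Its Parikh image is that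
of `L` translated by `ψ(c)`, and translation can be undone on semilinear sets: a linear set
inside `ψ(c) + ℕ^σ` has its base point there, so subtracting `ψ(c)` leaves it linear.
-/

/-- A set `Q ⊆ ℕ^α` is linear if it has a constant vector `v₀` and finitely many
period vectors `v₁, …, v_l` with `Q = {v₀ + i₁v₁ + ⋯ + i_l v_l}`. -/
def IsLinearSet' {α : Type*} (Q : Set (α → ℕ)) : Prop :=
  ∃ (v₀ : α → ℕ) (l : ℕ) (v : Fin l → α → ℕ),
    Q = { x | ∃ c : Fin l → ℕ, x = v₀ + ∑ j, c j • v j }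

/-- A set is semilinear if it is a finite union of linear sets. -/
def IsSemilinearSet' {α : Type*} (Q : Set (α → ℕ)) : Prop :=
  ∃ (n : ℕ) (Qs : Fin n → Set (α → ℕ)),
    (∀ i, IsLinearSet' (Qs i)) ∧ Q = ⋃ i, Qs i

open Classical in
/-- The Parikh image of a word: `parikhWord w a = |w|_a`. -/
noncomputable def parikhWord {σ : Type*} (w : List σ) : σ → ℕ :=
  fun a => w.count a

/-- A language is semilinear if its Parikh image is a semilinear set. -/
def IsSemilinearLanguage {σ : Type*} (L : Set (List σ)) : Prop :=
  IsSemilinearSet' (parikhWord '' L)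

theorem parikhWord_append {σ : Type*} (u v : List σ) :
    parikhWord (u ++ v) = parikhWord u + parikhWord v := by
  funext x
  simp [parikhWord, List.count_append]

theorem List.Perm.parikhWord_eq {σ : Type*} {u v : List σ} (h : u.Perm v) :
    parikhWord u = parikhWord v :=
  funext fun x => by classical exact h.count_eq x

theorem parikhWord_cons_append_singleton {σ : Type*} (b b' : σ) (w : List σ) :
    parikhWord (b :: (w ++ [b'])) = parikhWord [b, b'] + parikhWord w :=
  ((List.perm_append_singleton b' w).cons b).parikhWord_eq.trans (parikhWord_append [b, b'] w)

theorem parikhWord_replicate {σ : Type*} (n : ℕ) (b : σ) :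
    parikhWord (List.replicate n b) = n • parikhWord [b] := by
  funext x
  simp [parikhWord, List.count_replicate, List.count_singleton]

theorem parikhWord_of_forall_eq {σ : Type*} {a : σ} {w : List σ} (hw : ∀ x ∈ w, x = a) :
    parikhWord w = w.length • parikhWord [a] := by
  rw [List.eq_replicate_iff.2 ⟨rfl, hw⟩, List.length_replicate, parikhWord_replicate]

theorem isLinearSet'_add_nsmul {α : Type*} (v₀ v : α → ℕ) :
    IsLinearSet' { x | ∃ n : ℕ, x = v₀ + n • v } := by
  refine ⟨v₀, 1, fun _ => v, ?_⟩
  ext x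
  simp only [Set.mem_ofPred_eq, Fin.sum_univ_one]
  exact ⟨fun ⟨n, hn⟩ => ⟨fun _ => n, hn⟩, fun ⟨c, hc⟩ => ⟨c 0, hc⟩⟩

theorem IsLinearSet'.isSemilinearSet' {α : Type*} {Q : Set (α → ℕ)} (hQ : IsLinearSet' Q) :
    IsSemilinearSet' Q :=
  ⟨1, fun _ => Q, fun _ => hQ, (Set.iUnion_const Q).symm⟩

theorem IsLinearSet'.preimage_add_right {α : Type*} {Q : Set (α → ℕ)} (hQ : IsLinearSet' Q)
    {e : α → ℕ} (hQe : Q ⊆ Set.range (· + e)) : IsLinearSet' ((· + e) ⁻¹' Q) := by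
  obtain ⟨v₀, l, v, rfl⟩ := hQ
  obtain ⟨y, rfl⟩ : ∃ y, y + e = v₀ := hQe ⟨0, by simp⟩
  refine ⟨y, l, v, ?_⟩
  ext x
  simp only [Set.mem_preimage, Set.mem_ofPred_eq, add_right_comm y e, add_left_inj]

theorem IsSemilinearSet'.of_image_add_right {α : Type*} {S : Set (α → ℕ)} {e : α → ℕ}
    (h : IsSemilinearSet' ((· + e) '' S)) : IsSemilinearSet' S := by
  obtain ⟨n, Qs, hlin, hS⟩ := h
  have hsub : ∀ i, Qs i ⊆ Set.range (· + e) := fun i =>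
    (Set.subset_iUnion Qs i).trans (hS ▸ Set.image_subset_range _ _)
  refine ⟨n, fun i => (· + e) ⁻¹' Qs i, fun i => (hlin i).preimage_add_right (hsub i), ?_⟩
  rw [← Set.preimage_iUnion, ← hS, Set.preimage_image_eq _ (add_left_injective e)]

theorem IsSemilinearLanguage.of_image_cons {σ : Type*} {b : σ} {L : Set (List σ)}
    (h : IsSemilinearLanguage ((b :: ·) '' L)) : IsSemilinearLanguage L := by
  refine IsSemilinearSet'.of_image_add_right (e := parikhWord [b]) ?_
  have hcons : (fun w => parikhWord w + parikhWord [b]) = fun w => parikhWord (b :: w) :=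
    funext fun w => by rw [add_comm, ← parikhWord_append, List.singleton_append]
  rw [IsSemilinearLanguage, Set.image_image] at h
  rwa [Set.image_image, hcons]

section QuotientExample

variable {σ : Type*} {a c d : σ} {L : Set (List σ)}

theorem parikhWord_image_quotientExample (hLa : ∀ w ∈ L, ∀ x ∈ w, x = a) :
    parikhWord '' ({ x | ∃ w ∈ L, x = c :: (w ++ [d]) } ∪
       { x | ∃ w : List σ, (∀ y ∈ w, y = a) ∧ x = d :: (w ++ [c]) }) =
      { x | ∃ n : ℕ, x = parikhWord [c, d] + n • parikhWord [a] } := by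
  have hswap : parikhWord [d, c] = parikhWord [c, d] := (List.Perm.swap c d []).parikhWord_eq
  ext x
  constructor
  · rintro ⟨_, ⟨w, hw, rfl⟩ | ⟨w, hw, rfl⟩, rfl⟩
    · exact ⟨w.length, by
        rw [parikhWord_cons_append_singleton, parikhWord_of_forall_eq (hLa w hw)]⟩
    · exact ⟨w.length, by
        rw [parikhWord_cons_append_singleton, parikhWord_of_forall_eq hw, hswap]⟩
  · rintro ⟨n, rfl⟩
    refine ⟨d :: (List.replicate n a ++ [c]),
      Or.inr ⟨_, fun _ => List.eq_of_mem_replicate, rfl⟩, ?_⟩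
    rw [parikhWord_cons_append_singleton, parikhWord_replicate, hswap]

theorem rightQuotient_quotientExample (hcd : c ≠ d) :
    { w | w ++ [d] ∈
        ({ x | ∃ w ∈ L, x = c :: (w ++ [d]) } ∪
         { x | ∃ w : List σ, (∀ y ∈ w, y = a) ∧ x = d :: (w ++ [c]) }) }
      = (c :: ·) '' L := by
  ext w
  have hcons : ∀ u, w ++ [d] = c :: (u ++ [d]) ↔ w = c :: u := fun u => by
    rw [← List.cons_append, List.append_left_inj]
  have hlast : ∀ u, w ++ [d] ≠ d :: (u ++ [c]) := fun u h => by
    rw [← List.cons_append] at h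
    exact hcd (by simpa using (List.append_inj_right' h rfl).symm)
  simp only [Set.mem_ofPred_eq, Set.mem_union, Set.mem_image, hcons, hlast, and_false,
    exists_false, or_false, @eq_comm _ w]

end QuotientExample

theorem semilinear_not_closed_right_quotient_general {σ : Type*}
    (a c d : σ) (hcd : c ≠ d)
    (L : Set (List σ)) (hLa : ∀ w ∈ L, ∀ x ∈ w, x = a)
    (hL : ¬ IsSemilinearLanguage L) :
    IsSemilinearLanguage
      ({ x | ∃ w ∈ L, x = c :: (w ++ [d]) } ∪
       { x | ∃ w : List σ, (∀ y ∈ w, y = a) ∧ x = d :: (w ++ [c]) }) ∧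
    { w | w ++ [d] ∈
        ({ x | ∃ w ∈ L, x = c :: (w ++ [d]) } ∪
         { x | ∃ w : List σ, (∀ y ∈ w, y = a) ∧ x = d :: (w ++ [c]) }) }
      = (fun w => c :: w) '' L ∧
    ¬ IsSemilinearLanguage
      { w | w ++ [d] ∈
        ({ x | ∃ w ∈ L, x = c :: (w ++ [d]) } ∪
         { x | ∃ w : List σ, (∀ y ∈ w, y = a) ∧ x = d :: (w ++ [c]) }) } := by
  refine ⟨?_, rightQuotient_quotientExample hcd, ?_⟩
  · rw [IsSemilinearLanguage, parikhWord_image_quotientExample hLa]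
    exact (isLinearSet'_add_nsmul _ _).isSemilinearSet'
  · rw [rightQuotient_quotientExample hcd]
    exact fun h => hL h.of_image_cons

/-- for distinct letters a, c, d and any non-semilinear L ⊆ {a}*, the
language L' = c·L·d ∪ d·{a}*·c is semilinear, but the right quotient
L'·{d}⁻¹ = {w : wd ∈ L'} equals c·L and is not semilinear. -/
theorem semilinear_not_closed_right_quotient {σ : Type*} [Fintype σ]
    (a c d : σ) (hac : a ≠ c) (had : a ≠ d) (hcd : c ≠ d)
    (L : Set (List σ)) (hLa : ∀ w ∈ L, ∀ x ∈ w, x = a)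
    (hL : ¬ IsSemilinearLanguage L) :
    IsSemilinearLanguage
      ({ x | ∃ w ∈ L, x = c :: (w ++ [d]) } ∪
       { x | ∃ w : List σ, (∀ y ∈ w, y = a) ∧ x = d :: (w ++ [c]) }) ∧
    { w | w ++ [d] ∈
        ({ x | ∃ w ∈ L, x = c :: (w ++ [d]) } ∪
         { x | ∃ w : List σ, (∀ y ∈ w, y = a) ∧ x = d :: (w ++ [c]) }) }
      = (fun w => c :: w) '' L ∧
    ¬ IsSemilinearLanguage
      { w | w ++ [d] ∈
        ({ x | ∃ w ∈ L, x = c :: (w ++ [d]) } ∪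
         { x | ∃ w : List σ, (∀ y ∈ w, y = a) ∧ x = d :: (w ++ [c]) }) } :=
  semilinear_not_closed_right_quotient_general a c d hcd L hLa hL
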